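/- Landscape stability (Bubenik): let D = {(a_i, b_i)}_{i∈I} and D' = {(a'_j, b'_j)}_{j∈J} be finite persistence diagrams (finite families of pairs of reals with a_i < b_i and a'_j < b'_j), and let δ ≥ 0. Suppose there is a δ-matching between D and D', i.e. a subset s ⊆ I and an injective map φ : s → J such that (1) for every i ∈ s, max(|a_i − a'_{φ(i)}|, |b_i − b'_{φ(i)}|) ≤ δ, (2) for every i ∈ I \ s, (b_i − a_i)/2 ≤ δ, and (3) for every j ∈ J not in the image of φ, (b'_j − a'_j)/2 ≤ δ. Then for every k ≥ 1 and every t ∈ ℝ, |λ_k(t) − λ'_k(t)| ≤ δ, where λ_k and λ'_k are the k-th persistence landscape functions of D and D' respectively; in particular ‖λ_k − λ'_k‖_∞ ≤ δ. -/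

import Mathlib

/-- The tent function associated to an interval `(a, b)`:
`f_{(a,b)}(t) = max 0 (min (t - a) (b - t))`. -/
noncomputable def tent (a b t : ℝ) : ℝ := max 0 (min (t - a) (b - t))

/-- The `k`-th largest element of a finite multiset of reals (`k` is
1-indexed), interpreted as `0` if `k` exceeds the cardinality. -/
noncomputable def kthLargest (s : Multiset ℝ) (k : ℕ) : ℝ :=
  (s.sort (· ≥ ·)).getD (k - 1) 0

/-- The `k`-th persistence landscape function of the finite persistence
diagram `{(a j, b j)}_{j ∈ ι}`: the `k`-th largest value among the tent
functions evaluated at `t`. -/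
noncomputable def landscape {ι : Type*} [Fintype ι] (a b : ι → ℝ) (k : ℕ)
    (t : ℝ) : ℝ :=
  kthLargest (Multiset.map (fun j => tent (a j) (b j) t) Finset.univ.val) k

lemma tent_nonneg (a b t : ℝ) : 0 ≤ tent a b t := le_max_left _ _

lemma tent_le_half' (a b t : ℝ) (h : a < b) : tent a b t ≤ (b - a) / 2 := by
  unfold tent
  apply max_le (by linarith)
  rcases le_total (t - a) (b - t) with h' | h'
  · calc min (t-a) (b-t) ≤ t - a := min_le_left _ _
      _ ≤ (b - a)/2 := by linarith
  · calc min (t-a) (b-t) ≤ b - t := min_le_right _ _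
      _ ≤ (b - a)/2 := by linarith

lemma tent_sub_le (a b a' b' t : ℝ) :
    tent a b t ≤ tent a' b' t + max |a - a'| |b - b'| := by
  set d := max |a - a'| |b - b'| with hd
  have hd0 : 0 ≤ d := le_trans (abs_nonneg _) (le_max_left _ _)
  have ha : t - a ≤ (t - a') + d := by
    have h1 : a' - a ≤ |a - a'| := by rw [abs_sub_comm]; exact le_abs_self _
    have h2 : |a - a'| ≤ d := le_max_left _ _
    linarith
  have hb : b - t ≤ (b' - t) + d := by
    have h1 : b - b' ≤ |b - b'| := le_abs_self _
    have h2 : |b - b'| ≤ d := le_max_right _ _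
    linarith
  unfold tent
  apply max_le
  · have : 0 ≤ max 0 (min (t - a') (b' - t)) := le_max_left _ _
    linarith
  · rcases le_total (t - a') (b' - t) with h' | h'
    · have : min (t-a) (b-t) ≤ (t - a') + d := le_trans (min_le_left _ _) ha
      have h2 : t - a' ≤ max 0 (min (t - a') (b' - t)) := by
        rw [min_eq_left h']; exact le_max_right _ _
      linarith
    · have : min (t-a) (b-t) ≤ (b' - t) + d := le_trans (min_le_right _ _) hb
      have h2 : b' - t ≤ max 0 (min (t - a') (b' - t)) := by
        rw [min_eq_right h']; exact le_max_right _ _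
      linarith

lemma kthLargest_nonneg (s : Multiset ℝ) (h : ∀ x ∈ s, 0 ≤ x) (k : ℕ) :
    0 ≤ kthLargest s k := by
  unfold kthLargest
  rcases lt_or_ge (k - 1) (s.sort (· ≥ ·)).length with hlt | hle
  · rw [List.getD_eq_getElem _ _ hlt]
    exact h _ ((Multiset.mem_sort (· ≥ ·)).1 (List.getElem_mem hlt))
  · rw [List.getD_eq_default _ _ hle]

lemma le_card_filter_of_kthLargest (s : Multiset ℝ) (k : ℕ) (hk : 1 ≤ k)
    (hv : 0 < kthLargest s k) :
    k ≤ Multiset.card (s.filter (fun x => kthLargest s k ≤ x)) := by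
  set v := kthLargest s k with hvdef
  set l := s.sort (· ≥ ·) with hl
  have hsort : l.Pairwise (· ≥ ·) := Multiset.pairwise_sort _ _
  have hlt : k - 1 < l.length := by
    by_contra hcon
    push_neg at hcon
    rw [hvdef] at hv
    unfold kthLargest at hv
    rw [List.getD_eq_default _ _ hcon] at hv
    exact lt_irrefl _ hv
  have hget : l[k-1] = v := by
    rw [hvdef]; unfold kthLargest
    rw [List.getD_eq_getElem _ _ hlt]
  have hklen : k ≤ l.length := by omega
  -- all first k elements are ≥ v
  have hfirst : ∀ i (hi : i < l.length), i < k → v ≤ l[i] := by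
    intro i hi hik
    rcases lt_or_ge i (k-1) with h' | h'
    · rw [← hget]
      exact hsort.rel_get_of_lt (by simpa using h')
    · have : i = k - 1 := by omega
      subst this; rw [hget]
  have hcoe : s.filter (fun x => v ≤ x) = (l.filter (fun x => decide (v ≤ x))) := by
    conv_lhs => rw [← Multiset.sort_eq (r := (· ≥ ·)) (s := s)]
    rfl
  rw [hcoe]
  simp only [Multiset.coe_card]
  have hsplit : l = l.take k ++ l.drop k := (List.take_append_drop k l).symm
  have htake : (l.take k).filter (fun x => decide (v ≤ x)) = l.take k := by
    apply List.filter_eq_self.2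
    intro x hx
    rw [List.mem_iff_getElem] at hx
    obtain ⟨i, hi, hxe⟩ := hx
    have hi' : i < k := lt_of_lt_of_le hi (by simp [List.length_take])
    have hilen : i < l.length := by
      have := hi; rw [List.length_take] at this; omega
    rw [List.getElem_take] at hxe
    simpa [← hxe] using hfirst i hilen hi'
  calc k = (l.take k).length := by rw [List.length_take]; omega
    _ = ((l.take k).filter (fun x => decide (v ≤ x))).length := by rw [htake]
    _ ≤ (l.filter (fun x => decide (v ≤ x))).length := by
        conv_rhs => rw [hsplit]
        rw [List.filter_append, List.length_append]
        omega


lemma kthLargest_ge_of_card_filter (s : Multiset ℝ) (k : ℕ) (hk : 1 ≤ k) (w : ℝ)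
    (h : k ≤ Multiset.card (s.filter (fun x => w ≤ x))) : w ≤ kthLargest s k := by
  by_contra hcon
  push_neg at hcon
  set l := s.sort (· ≥ ·) with hl
  have hsort : l.Pairwise (· ≥ ·) := Multiset.pairwise_sort _ _
  have hklen : k ≤ l.length := by
    have := Multiset.card_le_card (Multiset.filter_le (fun x => w ≤ x) s)
    have hlen : l.length = Multiset.card s := Multiset.length_sort _
    omega
  have hlt : k - 1 < l.length := by omega
  have hget : kthLargest s k = l[k-1] := by
    unfold kthLargest; rw [List.getD_eq_getElem _ _ hlt]
  have hlater : ∀ i (hi : i < l.length), k - 1 ≤ i → l[i] < w := by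
    intro i hi hik
    rcases lt_or_eq_of_le hik with h' | h'
    · have : l[i] ≤ l[k-1] := hsort.rel_get_of_lt (by simpa using h')
      rw [← hget] at this
      linarith
    · have : l[i] = l[k-1] := by congr 1; omega
      rw [this, ← hget]; exact hcon
  have hcoe : s.filter (fun x => w ≤ x) = (l.filter (fun x => decide (w ≤ x))) := by
    conv_lhs => rw [← Multiset.sort_eq (r := (· ≥ ·)) (s := s)]
    rfl
  rw [hcoe] at h
  simp only [Multiset.coe_card] at h
  have hdrop : (l.drop (k-1)).filter (fun x => decide (w ≤ x)) = [] := by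
    apply List.filter_eq_nil_iff.2
    intro x hx
    rw [List.mem_iff_getElem] at hx
    obtain ⟨i, hi, hxe⟩ := hx
    have hilen : (k-1) + i < l.length := by
      rw [List.length_drop] at hi; omega
    rw [List.getElem_drop] at hxe
    have := hlater _ hilen (by omega)
    rw [hxe] at this
    simpa using not_le.2 this
  have hsplit : l = l.take (k-1) ++ l.drop (k-1) := (List.take_append_drop _ l).symm
  have : (l.filter (fun x => decide (w ≤ x))).length ≤ k - 1 := by
    conv_lhs => rw [hsplit]
    rw [List.filter_append, hdrop, List.append_nil]
    calc ((l.take (k-1)).filter _).length ≤ (l.take (k-1)).length :=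
          List.length_filter_le _ _
      _ ≤ k - 1 := by rw [List.length_take]; omega
  omega


lemma card_filter_map {ι : Type*} [Fintype ι] (f : ι → ℝ) (p : ℝ → Prop)
    [DecidablePred p] :
    Multiset.card ((Multiset.map f Finset.univ.val).filter p)
      = (Finset.univ.filter (fun i => p (f i))).card := by
  rw [← Multiset.countP_eq_card_filter, Multiset.countP_map]
  rfl

lemma key_le {ι κ : Type*} [Fintype ι] [Fintype κ] (f : ι → ℝ) (g : κ → ℝ)
    (hg : ∀ j, 0 ≤ g j) (δ : ℝ) (hδ : 0 ≤ δ) (k : ℕ) (hk : 1 ≤ k)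
    (H : ∀ v : ℝ, δ < v →
      (Finset.univ.filter (fun i => v ≤ f i)).card
        ≤ (Finset.univ.filter (fun j => v - δ ≤ g j)).card) :
    kthLargest (Multiset.map f Finset.univ.val) k
      ≤ kthLargest (Multiset.map g Finset.univ.val) k + δ := by
  set M := Multiset.map f Finset.univ.val with hM
  set N := Multiset.map g Finset.univ.val with hN
  have hNpos : 0 ≤ kthLargest N k := by
    apply kthLargest_nonneg
    intro x hx
    obtain ⟨j, _, rfl⟩ := Multiset.mem_map.1 hx
    exact hg j
  rcases le_or_gt (kthLargest M k) δ with hle | hgt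
  · linarith
  · set v := kthLargest M k with hv
    have h1 : k ≤ Multiset.card (M.filter (fun x => v ≤ x)) :=
      le_card_filter_of_kthLargest M k hk (by linarith)
    rw [hM, card_filter_map] at h1
    have h2 := le_trans h1 (H v hgt)
    rw [← card_filter_map g (fun x => v - δ ≤ x), ← hN] at h2
    have := kthLargest_ge_of_card_filter N k hk (v - δ) h2
    linarith

/-- **Landscape stability (Bubenik).**  If there is a `δ`-matching between two
finite persistence diagrams `D = {(a i, b i)}` and `D' = {(a' j, b' j)}`
— i.e. an injective partial matching `φ : s → κ` whose matched pairs have cost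
`max |a i - a' (φ i)| |b i - b' (φ i)| ≤ δ` and whose unmatched points
`(a, b)` have cost `(b - a)/2 ≤ δ` — then `|λ_k(t) - λ'_k(t)| ≤ δ` for every
`k ≥ 1` and every `t ∈ ℝ`. -/
theorem landscape_stability {ι κ : Type*} [Fintype ι] [Fintype κ]
    (a b : ι → ℝ) (a' b' : κ → ℝ)
    (hab : ∀ i, a i < b i) (hab' : ∀ j, a' j < b' j)
    (δ : ℝ) (hδ : 0 ≤ δ) (s : Finset ι) (φ : ι → κ) (hφ : Set.InjOn φ ↑s)
    (hmatched : ∀ i ∈ s, max |a i - a' (φ i)| |b i - b' (φ i)| ≤ δ)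
    (hunmatchedI : ∀ i ∉ s, (b i - a i) / 2 ≤ δ)
    (hunmatchedJ : ∀ j : κ, (∀ i ∈ s, φ i ≠ j) → (b' j - a' j) / 2 ≤ δ) :
    ∀ k : ℕ, 1 ≤ k → ∀ t : ℝ, |landscape a b k t - landscape a' b' k t| ≤ δ := by
  intro k hk t
  classical
  set f : ι → ℝ := fun i => tent (a i) (b i) t with hf
  set g : κ → ℝ := fun j => tent (a' j) (b' j) t with hg
  have hf0 : ∀ i, 0 ≤ f i := fun i => tent_nonneg _ _ _
  have hg0 : ∀ j, 0 ≤ g j := fun j => tent_nonneg _ _ _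
  -- matched pairs are close
  have hclose : ∀ i ∈ s, f i ≤ g (φ i) + δ ∧ g (φ i) ≤ f i + δ := by
    intro i hi
    constructor
    · exact le_trans (tent_sub_le _ _ _ _ _)
        (by have := hmatched i hi; linarith)
    · refine le_trans (tent_sub_le (a' (φ i)) (b' (φ i)) (a i) (b i) t) ?_
      have h1 : max |a' (φ i) - a i| |b' (φ i) - b i|
          = max |a i - a' (φ i)| |b i - b' (φ i)| := by
        rw [abs_sub_comm (a' (φ i)), abs_sub_comm (b' (φ i))]
      rw [h1]
      have := hmatched i hi; linarith
  have H1 : ∀ v : ℝ, δ < v →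
      (Finset.univ.filter (fun i => v ≤ f i)).card
        ≤ (Finset.univ.filter (fun j => v - δ ≤ g j)).card := by
    intro v hv
    set T := Finset.univ.filter (fun i => v ≤ f i) with hT
    have hTs : ↑T ⊆ (↑s : Set ι) := by
      intro i hi
      simp only [hT, Finset.coe_filter, Set.mem_setOf_eq, Finset.mem_univ,
        true_and] at hi
      by_contra hns
      have h1 := hunmatchedI i hns
      have h2 := tent_le_half' (a i) (b i) t (hab i)
      have : f i ≤ δ := le_trans h2 h1
      linarith
    have hinj : Set.InjOn φ ↑T := hφ.mono hTs
    have hcard : T.card = (T.image φ).card := (Finset.card_image_of_injOn hinj).symm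
    rw [hcard]
    apply Finset.card_le_card
    intro j hj
    obtain ⟨i, hi, rfl⟩ := Finset.mem_image.1 hj
    simp only [hT, Finset.mem_filter, Finset.mem_univ, true_and] at hi
    simp only [Finset.mem_filter, Finset.mem_univ, true_and]
    have his : i ∈ s := hTs (by simp [hT, hi])
    have := (hclose i his).1
    linarith
  have H2 : ∀ v : ℝ, δ < v →
      (Finset.univ.filter (fun j => v ≤ g j)).card
        ≤ (Finset.univ.filter (fun i => v - δ ≤ f i)).card := by
    intro v hv
    have hsub : Finset.univ.filter (fun j => v ≤ g j)
        ⊆ (Finset.univ.filter (fun i => v - δ ≤ f i)).image φ := by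
      intro j hj
      simp only [Finset.mem_filter, Finset.mem_univ, true_and] at hj
      have hmatch : ∃ i ∈ s, φ i = j := by
        by_contra hno
        push_neg at hno
        have h1 := hunmatchedJ j hno
        have h2 := tent_le_half' (a' j) (b' j) t (hab' j)
        have : g j ≤ δ := le_trans h2 h1
        linarith
      obtain ⟨i, his, rfl⟩ := hmatch
      apply Finset.mem_image.2
      refine ⟨i, ?_, rfl⟩
      simp only [Finset.mem_filter, Finset.mem_univ, true_and]
      have := (hclose i his).2
      linarith
    calc (Finset.univ.filter (fun j => v ≤ g j)).card
        ≤ ((Finset.univ.filter (fun i => v - δ ≤ f i)).image φ).card :=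
          Finset.card_le_card hsub
      _ ≤ (Finset.univ.filter (fun i => v - δ ≤ f i)).card :=
          Finset.card_image_le
  have hle1 := key_le f g hg0 δ hδ k hk H1
  have hle2 := key_le g f hf0 δ hδ k hk H2
  have e1 : landscape a b k t = kthLargest (Multiset.map f Finset.univ.val) k := rfl
  have e2 : landscape a' b' k t = kthLargest (Multiset.map g Finset.univ.val) k := rfl
  rw [abs_sub_le_iff, e1, e2]
  constructor <;> linarith
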